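/- For X, Y tangent to Σ, σ_{ab} X^a Y^b = [(γ θ_{ab} + σ^Σ_{ab}) + (1/(1+2γ²))(γ θ_{cd} v^c v^d + σ^Σ_{cd} v^c v^d) h_{ab}] X^a Y^b. -/

import Mathlib

open Finset

/-- Kronecker delta. -/
noncomputable def kron (a b : Fin 4) : ℝ := if a = b then 1 else 0

/-- Lowered index: `X_a = g_{ab} X^b`. -/
noncomputable def lower (g : Fin 4 → Fin 4 → ℝ) (X : Fin 4 → ℝ) (a : Fin 4) : ℝ :=
  ∑ b, g a b * X b

/-- Induced metric `h_{ab} = g_{ab} + N_a N_b`. -/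
noncomputable def hlow (g : Fin 4 → Fin 4 → ℝ) (N : Fin 4 → ℝ) (a b : Fin 4) : ℝ :=
  g a b + lower g N a * lower g N b

/-- Contravariant induced metric `h^{ab} = g^{ab} + N^a N^b`. -/
noncomputable def hup (ginv : Fin 4 → Fin 4 → ℝ) (N : Fin 4 → ℝ) (a b : Fin 4) : ℝ :=
  ginv a b + N a * N b

/-- Mean curvature `τ = h^{ab} K_{ab}`. -/
noncomputable def tauK (ginv K : Fin 4 → Fin 4 → ℝ) (N : Fin 4 → ℝ) : ℝ :=
  ∑ a, ∑ b, hup ginv N a b * K a b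

/-- Trace-free part `θ_{ab} = K_{ab} − (τ/3) h_{ab}` of the second fundamental form. -/
noncomputable def thetaK (g ginv K : Fin 4 → Fin 4 → ℝ) (N : Fin 4 → ℝ)
    (a b : Fin 4) : ℝ :=
  K a b - tauK ginv K N / 3 * hlow g N a b

/-- Lowered slice derivative `𝒟^Σ_a v_b = h_{bc} 𝒟^Σ_a v^c`. -/
noncomputable def Dsvlow (g Dsv : Fin 4 → Fin 4 → ℝ) (N : Fin 4 → ℝ)
    (a b : Fin 4) : ℝ :=
  ∑ c, hlow g N b c * Dsv a c

/-- Slice divergence `𝒟^Σ_c v^c = h^{ab} 𝒟^Σ_a v_b`. -/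
noncomputable def divsv (g ginv Dsv : Fin 4 → Fin 4 → ℝ) (N : Fin 4 → ℝ) : ℝ :=
  ∑ a, ∑ b, hup ginv N a b * Dsvlow g Dsv N a b

/-- Induced shear
`σ^Σ_{ab} = (1/2)(𝒟^Σ_a v_b + 𝒟^Σ_b v_a) − (1/3)(𝒟^Σ_c v^c) h_{ab}`. -/
noncomputable def sigmaS (g ginv Dsv : Fin 4 → Fin 4 → ℝ) (N : Fin 4 → ℝ)
    (a b : Fin 4) : ℝ :=
  (1 / 2) * (Dsvlow g Dsv N a b + Dsvlow g Dsv N b a)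
    - (1 / 3) * divsv g ginv Dsv N * hlow g N a b


section Helpers

lemma sum_mul_kron (f : Fin 4 → ℝ) (b : Fin 4) : ∑ c, f c * kron c b = f b := by
  simp [kron, mul_ite]

lemma kron_mul_sum (f : Fin 4 → ℝ) (b : Fin 4) : ∑ c, kron b c * f c = f b := by
  simp [kron, ite_mul]

lemma kron_symm (a b : Fin 4) : kron a b = kron b a := by simp [kron, eq_comm]

lemma sum_swap4 (F : Fin 4 → Fin 4 → Fin 4 → Fin 4 → ℝ) :
    ∑ c, ∑ d, ∑ a, ∑ b, F c d a b = ∑ a, ∑ b, ∑ c, ∑ d, F c d a b := by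
  calc ∑ c, ∑ d, ∑ a, ∑ b, F c d a b
      = ∑ c, ∑ a, ∑ d, ∑ b, F c d a b :=
        Finset.sum_congr rfl fun c _ => Finset.sum_comm ..
    _ = ∑ a, ∑ c, ∑ d, ∑ b, F c d a b := Finset.sum_comm ..
    _ = ∑ a, ∑ c, ∑ b, ∑ d, F c d a b :=
        Finset.sum_congr rfl fun a _ => Finset.sum_congr rfl fun c _ => Finset.sum_comm ..
    _ = ∑ a, ∑ b, ∑ c, ∑ d, F c d a b :=
        Finset.sum_congr rfl fun a _ => Finset.sum_comm ..

lemma dsum_comb2 (f₁ f₂ : Fin 4 → Fin 4 → ℝ) (c₁ c₂ : ℝ) :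
    ∑ a, ∑ b, (c₁ * f₁ a b + c₂ * f₂ a b)
      = c₁ * (∑ a, ∑ b, f₁ a b) + c₂ * (∑ a, ∑ b, f₂ a b) := by
  simp only [Finset.sum_add_distrib, ← Finset.mul_sum]

lemma dsum_comb3 (f₁ f₂ f₃ : Fin 4 → Fin 4 → ℝ) (c₁ c₂ c₃ : ℝ) :
    ∑ a, ∑ b, (c₁ * f₁ a b + c₂ * f₂ a b + c₃ * f₃ a b)
      = c₁ * (∑ a, ∑ b, f₁ a b) + c₂ * (∑ a, ∑ b, f₂ a b) + c₃ * (∑ a, ∑ b, f₃ a b) := by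
  simp only [Finset.sum_add_distrib, ← Finset.mul_sum]

lemma dsum_comb4 (f₁ f₂ f₃ f₄ : Fin 4 → Fin 4 → ℝ) (c₁ c₂ c₃ c₄ : ℝ) :
    ∑ a, ∑ b, (c₁ * f₁ a b + c₂ * f₂ a b + c₃ * f₃ a b + c₄ * f₄ a b)
      = c₁ * (∑ a, ∑ b, f₁ a b) + c₂ * (∑ a, ∑ b, f₂ a b)
        + c₃ * (∑ a, ∑ b, f₃ a b) + c₄ * (∑ a, ∑ b, f₄ a b) := by
  simp only [Finset.sum_add_distrib, ← Finset.mul_sum]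

end Helpers

/-- For `X`, `Y` tangent to the slice,
`σ_{ab}X^aY^b = [(γθ_{ab} + σ^Σ_{ab}) + (1/(1+2γ²))(γθ_{cd}v^cv^d + σ^Σ_{cd}v^cv^d) h_{ab}]X^aY^b`. -/
theorem shear_in_terms_of_slice_data
    (g ginv K Dsv Sσ : Fin 4 → Fin 4 → ℝ) (N v : Fin 4 → ℝ) (γ AN : ℝ)
    (hgsymm : ∀ a b, g a b = g b a)
    (hginv : ∀ a b, ∑ c, ginv a c * g c b = kron a b)
    (hginv' : ∀ a b, ∑ c, g a c * ginv c b = kron a b)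
    (hNN : ∑ a, lower g N a * N a = -1)
    (hvtang : ∑ a, lower g N a * v a = 0)
    (hγpos : 0 < γ)
    (hγ : γ ^ 2 = 1 + ∑ a, lower g v a * v a)
    (hKsymm : ∀ a b, K a b = K b a)
    (hKN : ∀ a, ∑ b, K a b * N b = 0)
    (hDsvN : ∀ b, ∑ a, N a * Dsv a b = 0)
    (hDsvN' : ∀ a, ∑ b, lower g N b * Dsv a b = 0)
    -- tangential values of the shear of `u` (Lemma `sigma-eval-v1` with `𝒦 = K − h·𝒜N`):
    (hσtan : ∀ X Y : Fin 4 → ℝ, (∑ a, lower g N a * X a) = 0 →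
      (∑ a, lower g N a * Y a) = 0 →
      ∑ a, ∑ b, Sσ a b * X a * Y b
        = ∑ a, ∑ b,
            (γ * (K a b - hlow g N a b * AN)
              + (1 / 2) * (Dsvlow g Dsv N a b + Dsvlow g Dsv N b a)) * X a * Y b)
    -- `u^a σ_{ab} = 0` for `u = γN + v`:
    (hσu : ∀ b, ∑ a, (γ * N a + v a) * Sσ a b = 0)
    (hσsymm : ∀ a b, Sσ a b = Sσ b a)
    -- the shear is trace free, `g^{ab} σ_{ab} = 0`:
    (hσtrace : ∑ a, ∑ b, ginv a b * Sσ a b = 0) :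
    ∀ X Y : Fin 4 → ℝ, (∑ a, lower g N a * X a) = 0 →
      (∑ a, lower g N a * Y a) = 0 →
      ∑ a, ∑ b, Sσ a b * X a * Y b
        = ∑ a, ∑ b,
            ((γ * thetaK g ginv K N a b + sigmaS g ginv Dsv N a b)
              + (1 / (1 + 2 * γ ^ 2)) *
                ((γ * ∑ c, ∑ d, thetaK g ginv K N c d * v c * v d)
                  + (∑ c, ∑ d, sigmaS g ginv Dsv N c d * v c * v d)) * hlow g N a b)
            * X a * Y b := by
  intro X Y hX hY
  have hγne : γ ≠ 0 := ne_of_gt hγpos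
  have h2γ : (1 + 2 * γ ^ 2) ≠ 0 := by positivity
  -- raising an index with the inverse metric
  have hraise : ∀ (w : Fin 4 → ℝ) (a : Fin 4), ∑ c, ginv a c * lower g w c = w a := by
    intro w a
    calc ∑ c, ginv a c * lower g w c
        = ∑ c, ∑ d, ginv a c * g c d * w d := by
          simp only [lower, Finset.mul_sum]
          exact Finset.sum_congr rfl fun c _ => Finset.sum_congr rfl fun d _ => by ring
      _ = ∑ d, (∑ c, ginv a c * g c d) * w d := by
          rw [Finset.sum_comm]
          exact Finset.sum_congr rfl fun d _ => (Finset.sum_mul ..).symm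
      _ = ∑ d, kron a d * w d := Finset.sum_congr rfl fun d _ => by rw [hginv]
      _ = w a := kron_mul_sum _ _
  -- symmetry of the inverse metric
  have hginvsym : ∀ a b, ginv a b = ginv b a := by
    intro a b
    calc ginv a b = ∑ d, ginv a d * kron d b := (sum_mul_kron _ _).symm
      _ = ∑ d, ginv a d * ∑ c, ginv b c * g c d := by
          refine Finset.sum_congr rfl fun d _ => ?_
          rw [kron_symm d b, ← hginv b d]
      _ = ∑ c, ginv b c * ∑ d, ginv a d * g d c := by
          simp only [Finset.mul_sum]
          rw [Finset.sum_comm]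
          refine Finset.sum_congr rfl fun c _ => Finset.sum_congr rfl fun d _ => ?_
          rw [hgsymm c d]; ring
      _ = ∑ c, ginv b c * kron a c := Finset.sum_congr rfl fun c _ => by rw [hginv a c]
      _ = ∑ c, ginv b c * kron c a := Finset.sum_congr rfl fun c _ => by rw [kron_symm]
      _ = ginv b a := sum_mul_kron _ _
  have hraise' : ∀ a, ∑ c, lower g N c * ginv c a = N a := by
    intro a
    calc ∑ c, lower g N c * ginv c a = ∑ c, ginv a c * lower g N c :=
          Finset.sum_congr rfl fun c _ => by rw [hginvsym c a]; ring
      _ = N a := hraise N a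
  have hNn : ∑ a, N a * lower g N a = -1 := by
    rw [show (∑ a, N a * lower g N a) = ∑ a, lower g N a * N a from
      Finset.sum_congr rfl fun a _ => mul_comm _ _]
    exact hNN
  have hgvv : ∑ a, lower g v a * v a = γ ^ 2 - 1 := by linarith [hγ]
  -- h(v,v) = γ² - 1
  have hlowvv : ∑ c, ∑ d, hlow g N c d * v c * v d = γ ^ 2 - 1 := by
    have inner : ∀ c, ∑ d, hlow g N c d * v c * v d
        = lower g v c * v c + (lower g N c * v c) * ∑ d, lower g N d * v d := by
      intro c
      rw [Finset.mul_sum,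
        show lower g v c * v c = ∑ d, g c d * v d * v c from by rw [lower, Finset.sum_mul],
        ← Finset.sum_add_distrib]
      exact Finset.sum_congr rfl fun d _ => by simp only [hlow]; ring
    rw [Finset.sum_congr rfl fun c _ => inner c, hvtang]
    simp only [mul_zero, add_zero]
    exact hgvv
  -- contracting σ with N in the first slot
  have hσNb : ∀ b, ∑ a, N a * Sσ a b = -(1/γ) * ∑ a, v a * Sσ a b := by
    intro b
    have h0 := hσu b
    have hsplit : ∑ a, (γ * N a + v a) * Sσ a b
        = γ * (∑ a, N a * Sσ a b) + ∑ a, v a * Sσ a b := by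
      rw [Finset.mul_sum, ← Finset.sum_add_distrib]
      exact Finset.sum_congr rfl fun a _ => by ring
    rw [hsplit] at h0
    field_simp
    linarith
  -- σ(N,N) = σ(v,v)/γ²
  have hσNN : ∑ a, ∑ b, N a * N b * Sσ a b = (∑ c, ∑ d, Sσ c d * v c * v d) / γ ^ 2 := by
    have s1 : ∑ a, ∑ b, N a * N b * Sσ a b
        = ∑ b, (∑ a, N a * Sσ a b) * N b := by
      rw [Finset.sum_comm]
      refine Finset.sum_congr rfl fun b _ => ?_
      rw [Finset.sum_mul]
      exact Finset.sum_congr rfl fun a _ => by ring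
    have s2 : ∀ a, ∑ b, Sσ a b * v b = -(γ * ∑ b, Sσ a b * N b) := by
      intro a
      have h1 := hσNb a
      have e1 : ∑ b, N b * Sσ b a = ∑ b, Sσ a b * N b :=
        Finset.sum_congr rfl fun b _ => by rw [hσsymm b a]; ring
      have e2 : ∑ b, v b * Sσ b a = ∑ b, Sσ a b * v b :=
        Finset.sum_congr rfl fun b _ => by rw [hσsymm b a]; ring
      rw [e1, e2] at h1
      field_simp at h1 ⊢
      linarith
    have s3 : ∑ c, ∑ d, Sσ c d * v c * v d
        = ∑ a, (∑ b, Sσ a b * v b) * v a := by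
      refine Finset.sum_congr rfl fun a _ => ?_
      rw [Finset.sum_mul]
      exact Finset.sum_congr rfl fun b _ => by ring
    calc ∑ a, ∑ b, N a * N b * Sσ a b
        = ∑ b, (∑ a, N a * Sσ a b) * N b := s1
      _ = ∑ b, (-(1/γ) * ∑ a, v a * Sσ a b) * N b :=
          Finset.sum_congr rfl fun b _ => by rw [hσNb b]
      _ = -(1/γ) * ∑ b, ∑ a, v a * Sσ a b * N b := by
          simp only [Finset.mul_sum, Finset.sum_mul]
          exact Finset.sum_congr rfl fun b _ => Finset.sum_congr rfl fun a _ => by ring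
      _ = -(1/γ) * ∑ a, v a * ∑ b, Sσ a b * N b := by
          rw [Finset.sum_comm]
          refine congrArg _ (Finset.sum_congr rfl fun a _ => ?_)
          rw [Finset.mul_sum]
          exact Finset.sum_congr rfl fun b _ => by ring
      _ = -(1/γ) * ∑ a, v a * (-(1/γ) * ∑ b, Sσ a b * v b) := by
          refine congrArg _ (Finset.sum_congr rfl fun a _ => ?_)
          congr 1
          have h2 := s2 a
          field_simp at h2 ⊢
          linarith
      _ = (1/γ^2) * ∑ a, (∑ b, Sσ a b * v b) * v a := by
          simp only [Finset.mul_sum, Finset.sum_mul]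
          refine Finset.sum_congr rfl fun a _ => Finset.sum_congr rfl fun b _ => ?_
          field_simp
      _ = (∑ c, ∑ d, Sσ c d * v c * v d) / γ ^ 2 := by
          rw [s3]; field_simp
  -- h^{ab}σ_{ab} = σ(v,v)/γ²
  have hhupσ : ∑ a, ∑ b, hup ginv N a b * Sσ a b
      = (∑ c, ∑ d, Sσ c d * v c * v d) / γ ^ 2 := by
    have split : ∑ a, ∑ b, hup ginv N a b * Sσ a b
        = 1 * (∑ a, ∑ b, ginv a b * Sσ a b) + 1 * (∑ a, ∑ b, N a * N b * Sσ a b) := by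
      rw [← dsum_comb2]
      exact Finset.sum_congr rfl fun a _ => Finset.sum_congr rfl fun b _ => by
        simp only [hup]; ring
    rw [split, hσtrace, hσNN]; ring
  -- tangential projectors
  set P : Fin 4 → Fin 4 → ℝ := fun c a => kron a c + N a * lower g N c with hPdef
  have hPtan : ∀ c, ∑ a, lower g N a * P c a = 0 := by
    intro c
    have e : ∑ a, lower g N a * P c a
        = (∑ a, lower g N a * kron a c) + (∑ a, lower g N a * N a) * lower g N c := by
      rw [Finset.sum_mul, ← Finset.sum_add_distrib]
      exact Finset.sum_congr rfl fun a _ => by simp only [hPdef]; ring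
    rw [e, sum_mul_kron, hNN]; ring
  have hPP : ∀ a b, ∑ c, ∑ d, ginv c d * P c a * P d b = hup ginv N a b := by
    intro a b
    have inner : ∀ c, ∑ d, ginv c d * P c a * P d b
        = (ginv c b + N b * N c) * P c a := by
      intro c
      have e1 : ∑ d, ginv c d * P d b
          = (∑ d, ginv c d * kron b d) + N b * ∑ d, ginv c d * lower g N d := by
        rw [Finset.mul_sum, ← Finset.sum_add_distrib]
        exact Finset.sum_congr rfl fun d _ => by simp only [hPdef]; ring
      have e2 : ∑ d, ginv c d * kron b d = ginv c b := by
        rw [Finset.sum_congr rfl fun d (_ : d ∈ Finset.univ) => by rw [kron_symm b d]]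
        exact sum_mul_kron _ _
      have e3 : ∑ d, ginv c d * P d b = ginv c b + N b * N c := by
        rw [e1, e2, hraise N c]
      calc ∑ d, ginv c d * P c a * P d b
          = (∑ d, ginv c d * P d b) * P c a := by
            rw [Finset.sum_mul]
            exact Finset.sum_congr rfl fun d _ => by ring
        _ = (ginv c b + N b * N c) * P c a := by rw [e3]
    rw [Finset.sum_congr rfl fun c (_ : c ∈ Finset.univ) => inner c]
    have expand : ∑ c, (ginv c b + N b * N c) * P c a
        = (∑ c, ginv c b * kron c a) + (∑ c, lower g N c * ginv c b) * N a
          + (∑ c, N c * kron c a) * N b + (∑ c, N c * lower g N c) * (N a * N b) := by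
      simp only [Finset.sum_mul, ← Finset.sum_add_distrib]
      refine Finset.sum_congr rfl fun c _ => ?_
      simp only [hPdef]
      rw [kron_symm a c]
      ring
    rw [expand, sum_mul_kron (fun c => ginv c b) a, hraise' b, sum_mul_kron N a, hNn]
    simp only [hup]; ring
  -- contraction of a bilinear form against the projected metric
  have hcontr : ∀ B : Fin 4 → Fin 4 → ℝ,
      (∑ c, ∑ d, ginv c d * ∑ a, ∑ b, B a b * P c a * P d b)
        = ∑ a, ∑ b, hup ginv N a b * B a b := by
    intro B
    calc ∑ c, ∑ d, ginv c d * ∑ a, ∑ b, B a b * P c a * P d b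
        = ∑ c, ∑ d, ∑ a, ∑ b, ginv c d * (B a b * P c a * P d b) := by
          simp only [Finset.mul_sum]
      _ = ∑ a, ∑ b, ∑ c, ∑ d, ginv c d * (B a b * P c a * P d b) := sum_swap4 _
      _ = ∑ a, ∑ b, B a b * ∑ c, ∑ d, ginv c d * P c a * P d b := by
          refine Finset.sum_congr rfl fun a _ => Finset.sum_congr rfl fun b _ => ?_
          simp only [Finset.mul_sum]
          exact Finset.sum_congr rfl fun c _ => Finset.sum_congr rfl fun d _ => by ring
      _ = ∑ a, ∑ b, hup ginv N a b * B a b := by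
          refine Finset.sum_congr rfl fun a _ => Finset.sum_congr rfl fun b _ => ?_
          rw [hPP a b]; ring
  -- h^{ab}σ_{ab} = h^{ab}(γ𝒦 + sym 𝒟v)_{ab}
  have hhupστ : ∑ a, ∑ b, hup ginv N a b * Sσ a b
      = ∑ a, ∑ b, hup ginv N a b *
          (γ * (K a b - hlow g N a b * AN)
            + (1 / 2) * (Dsvlow g Dsv N a b + Dsvlow g Dsv N b a)) := by
    have q1 : (∑ c, ∑ d, ginv c d * ∑ a, ∑ b, Sσ a b * P c a * P d b)
        = ∑ a, ∑ b, hup ginv N a b * Sσ a b := hcontr Sσ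
    have q2 : (∑ c, ∑ d, ginv c d * ∑ a, ∑ b,
          (γ * (K a b - hlow g N a b * AN)
            + (1 / 2) * (Dsvlow g Dsv N a b + Dsvlow g Dsv N b a)) * P c a * P d b)
        = ∑ a, ∑ b, hup ginv N a b *
            (γ * (K a b - hlow g N a b * AN)
              + (1 / 2) * (Dsvlow g Dsv N a b + Dsvlow g Dsv N b a)) := hcontr _
    rw [← q1, ← q2]
    exact Finset.sum_congr rfl fun c _ => Finset.sum_congr rfl fun d _ => by
      rw [hσtan (P c) (P d) (hPtan c) (hPtan d)]
  -- the four basic contractions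
  have hB1 : ∑ a, ∑ b, ginv a b * g a b = 4 := by
    have inner : ∀ a, ∑ b, ginv a b * g a b = 1 := by
      intro a
      calc ∑ b, ginv a b * g a b = ∑ b, ginv a b * g b a :=
            Finset.sum_congr rfl fun b _ => by rw [hgsymm a b]
        _ = kron a a := hginv a a
        _ = 1 := by simp [kron]
    rw [Finset.sum_congr rfl fun a (_ : a ∈ Finset.univ) => inner a]
    norm_num
  have hB2 : ∑ a, ∑ b, ginv a b * (lower g N a * lower g N b) = -1 := by
    have inner : ∀ a, ∑ b, ginv a b * (lower g N a * lower g N b)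
        = lower g N a * N a := by
      intro a
      rw [show lower g N a * N a
          = lower g N a * ∑ b, ginv a b * lower g N b from by rw [hraise N a]]
      rw [Finset.mul_sum]
      exact Finset.sum_congr rfl fun b _ => by ring
    rw [Finset.sum_congr rfl fun a (_ : a ∈ Finset.univ) => inner a]
    exact hNN
  have hB3 : ∑ a, ∑ b, N a * N b * g a b = -1 := by
    have inner : ∀ a, ∑ b, N a * N b * g a b = N a * lower g N a := by
      intro a
      rw [show N a * lower g N a = N a * ∑ b, g a b * N b from rfl, Finset.mul_sum]
      exact Finset.sum_congr rfl fun b _ => by ring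
    rw [Finset.sum_congr rfl fun a (_ : a ∈ Finset.univ) => inner a]
    exact hNn
  have hB4 : ∑ a, ∑ b, (N a * lower g N a) * (N b * lower g N b) = 1 := by
    rw [← Finset.sum_mul_sum]
    rw [hNn]; norm_num
  have hhuph : ∑ a, ∑ b, hup ginv N a b * hlow g N a b = 3 := by
    have split : ∑ a, ∑ b, hup ginv N a b * hlow g N a b
        = 1 * (∑ a, ∑ b, ginv a b * g a b)
          + 1 * (∑ a, ∑ b, ginv a b * (lower g N a * lower g N b))
          + 1 * (∑ a, ∑ b, N a * N b * g a b)
          + 1 * (∑ a, ∑ b, (N a * lower g N a) * (N b * lower g N b)) := by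
      rw [← dsum_comb4]
      exact Finset.sum_congr rfl fun a _ => Finset.sum_congr rfl fun b _ => by
        simp only [hup, hlow]; ring
    rw [split, hB1, hB2, hB3, hB4]; norm_num
  have hupsym : ∀ a b, hup ginv N a b = hup ginv N b a := by
    intro a b; simp only [hup]; rw [hginvsym a b]; ring
  have hS4 : ∑ a, ∑ b, hup ginv N a b * Dsvlow g Dsv N b a = divsv g ginv Dsv N := by
    rw [show divsv g ginv Dsv N
      = ∑ a, ∑ b, hup ginv N a b * Dsvlow g Dsv N a b from rfl]
    rw [Finset.sum_comm]
    exact Finset.sum_congr rfl fun b _ => Finset.sum_congr rfl fun a _ => by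
      rw [hupsym a b]
  -- h^{ab}(γ𝒦 + sym 𝒟v)_{ab} = γτ − 3γ𝒜N + div
  have hhupT : ∑ a, ∑ b, hup ginv N a b *
        (γ * (K a b - hlow g N a b * AN)
          + (1 / 2) * (Dsvlow g Dsv N a b + Dsvlow g Dsv N b a))
      = γ * tauK ginv K N - γ * AN * 3 + divsv g ginv Dsv N := by
    calc ∑ a, ∑ b, hup ginv N a b *
          (γ * (K a b - hlow g N a b * AN)
            + (1 / 2) * (Dsvlow g Dsv N a b + Dsvlow g Dsv N b a))
        = ∑ a, ∑ b, (γ * (hup ginv N a b * K a b)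
            + (-(γ * AN)) * (hup ginv N a b * hlow g N a b)
            + (1/2) * (hup ginv N a b * Dsvlow g Dsv N a b)
            + (1/2) * (hup ginv N a b * Dsvlow g Dsv N b a)) :=
          Finset.sum_congr rfl fun a _ => Finset.sum_congr rfl fun b _ => by ring
      _ = γ * (∑ a, ∑ b, hup ginv N a b * K a b)
            + (-(γ * AN)) * (∑ a, ∑ b, hup ginv N a b * hlow g N a b)
            + (1/2) * (∑ a, ∑ b, hup ginv N a b * Dsvlow g Dsv N a b)
            + (1/2) * (∑ a, ∑ b, hup ginv N a b * Dsvlow g Dsv N b a) :=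
          dsum_comb4 _ _ _ _ _ _ _ _
      _ = γ * tauK ginv K N - γ * AN * 3 + divsv g ginv Dsv N := by
          rw [show (∑ a, ∑ b, hup ginv N a b * K a b) = tauK ginv K N from rfl,
            show (∑ a, ∑ b, hup ginv N a b * Dsvlow g Dsv N a b)
              = divsv g ginv Dsv N from rfl, hhuph, hS4]
          ring
  have hDswap : ∑ a, ∑ b, Dsvlow g Dsv N b a * v a * v b
      = ∑ c, ∑ d, Dsvlow g Dsv N c d * v c * v d := by
    rw [Finset.sum_comm]
    exact Finset.sum_congr rfl fun c _ => Finset.sum_congr rfl fun d _ => by ring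
  -- σ(v,v)
  have hσvv : ∑ c, ∑ d, Sσ c d * v c * v d
      = γ * (∑ c, ∑ d, K c d * v c * v d) - γ * AN * (γ ^ 2 - 1)
        + ∑ c, ∑ d, Dsvlow g Dsv N c d * v c * v d := by
    calc ∑ c, ∑ d, Sσ c d * v c * v d
        = ∑ a, ∑ b, (γ * (K a b - hlow g N a b * AN)
            + (1 / 2) * (Dsvlow g Dsv N a b + Dsvlow g Dsv N b a)) * v a * v b :=
          hσtan v v hvtang hvtang
      _ = ∑ a, ∑ b, (γ * (K a b * v a * v b)
            + (-(γ * AN)) * (hlow g N a b * v a * v b)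
            + (1/2) * (Dsvlow g Dsv N a b * v a * v b)
            + (1/2) * (Dsvlow g Dsv N b a * v a * v b)) :=
          Finset.sum_congr rfl fun a _ => Finset.sum_congr rfl fun b _ => by ring
      _ = γ * (∑ a, ∑ b, K a b * v a * v b)
            + (-(γ * AN)) * (∑ a, ∑ b, hlow g N a b * v a * v b)
            + (1/2) * (∑ a, ∑ b, Dsvlow g Dsv N a b * v a * v b)
            + (1/2) * (∑ a, ∑ b, Dsvlow g Dsv N b a * v a * v b) :=
          dsum_comb4 _ _ _ _ _ _ _ _
      _ = γ * (∑ c, ∑ d, K c d * v c * v d) - γ * AN * (γ ^ 2 - 1)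
            + ∑ c, ∑ d, Dsvlow g Dsv N c d * v c * v d := by
          rw [hlowvv, hDswap]; ring
  -- the key scalar identity
  have Epoly : γ ^ 2 * (γ * tauK ginv K N - γ * AN * 3 + divsv g ginv Dsv N)
      = γ * (∑ c, ∑ d, K c d * v c * v d) - γ * AN * (γ ^ 2 - 1)
        + ∑ c, ∑ d, Dsvlow g Dsv N c d * v c * v d := by
    have E := hhupσ
    rw [hhupστ, hhupT, hσvv] at E
    field_simp at E
    linear_combination E
  have hfin : 1 / (1 + 2 * γ ^ 2) *
        (γ * ((∑ c, ∑ d, K c d * v c * v d) - tauK ginv K N / 3 * (γ ^ 2 - 1))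
          + ((∑ c, ∑ d, Dsvlow g Dsv N c d * v c * v d)
              - 1 / 3 * divsv g ginv Dsv N * (γ ^ 2 - 1)))
      = (γ * tauK ginv K N + divsv g ginv Dsv N) / 3 - γ * AN := by
    field_simp
    linarith [Epoly]
  -- evaluating the v,v-contractions of θ and σ^Σ
  have hΘ : (∑ c, ∑ d, thetaK g ginv K N c d * v c * v d)
      = (∑ c, ∑ d, K c d * v c * v d) - tauK ginv K N / 3 * (γ ^ 2 - 1) := by
    calc ∑ c, ∑ d, thetaK g ginv K N c d * v c * v d
        = ∑ c, ∑ d, (1 * (K c d * v c * v d)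
            + (-(tauK ginv K N / 3)) * (hlow g N c d * v c * v d)) :=
          Finset.sum_congr rfl fun c _ => Finset.sum_congr rfl fun d _ => by
            simp only [thetaK]; ring
      _ = 1 * (∑ c, ∑ d, K c d * v c * v d)
            + (-(tauK ginv K N / 3)) * (∑ c, ∑ d, hlow g N c d * v c * v d) :=
          dsum_comb2 _ _ _ _
      _ = (∑ c, ∑ d, K c d * v c * v d) - tauK ginv K N / 3 * (γ ^ 2 - 1) := by
          rw [hlowvv]; ring
  have hΞ : (∑ c, ∑ d, sigmaS g ginv Dsv N c d * v c * v d)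
      = (∑ c, ∑ d, Dsvlow g Dsv N c d * v c * v d)
          - 1 / 3 * divsv g ginv Dsv N * (γ ^ 2 - 1) := by
    calc ∑ c, ∑ d, sigmaS g ginv Dsv N c d * v c * v d
        = ∑ c, ∑ d, ((1/2) * (Dsvlow g Dsv N c d * v c * v d)
            + (1/2) * (Dsvlow g Dsv N d c * v c * v d)
            + (-(1 / 3 * divsv g ginv Dsv N)) * (hlow g N c d * v c * v d)) :=
          Finset.sum_congr rfl fun c _ => Finset.sum_congr rfl fun d _ => by
            simp only [sigmaS]; ring
      _ = (1/2) * (∑ c, ∑ d, Dsvlow g Dsv N c d * v c * v d)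
            + (1/2) * (∑ c, ∑ d, Dsvlow g Dsv N d c * v c * v d)
            + (-(1 / 3 * divsv g ginv Dsv N)) * (∑ c, ∑ d, hlow g N c d * v c * v d) :=
          dsum_comb3 _ _ _ _ _ _
      _ = (∑ c, ∑ d, Dsvlow g Dsv N c d * v c * v d)
            - 1 / 3 * divsv g ginv Dsv N * (γ ^ 2 - 1) := by
          rw [hlowvv, hDswap]; ring
  -- final assembly
  rw [hσtan X Y hX hY, hΘ, hΞ]
  refine Finset.sum_congr rfl fun a _ => Finset.sum_congr rfl fun b _ => ?_
  simp only [thetaK, sigmaS]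
  rw [hfin]
  ring
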